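/- Stable Lorenz-gauge potentials for an incoming plane wave: Let ω > 0, μ, ε > 0, k = ω√(με), and let u, E_p ∈ ℝ³ with |u| = 1 and u·E_p = 0. Define A'(x) = −u (x·E_p) √(με) e^{ik u·x} and φ'(x) = −(x·E_p) e^{ik u·x} for x ∈ ℝ³. Then: (i) ΔA' + k²A' = 0 and Δφ' + k²φ' = 0 on ℝ³; (ii) the Lorenz gauge holds: ∇·A' = iωμε φ'; (iii) these potentials represent the incoming plane wave: iωA'(x) − ∇φ'(x) = E_p e^{ik u·x} and (1/μ)(∇×A')(x) = √(ε/μ) (u×E_p) e^{ik u·x} for all x ∈ ℝ³; (iv) A' and φ' are bounded on every bounded set uniformly as ω → 0. -/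

import Mathlib

noncomputable section

open MeasureTheory Filter Complex
open scoped NNReal Topology

/-- Three-dimensional Euclidean space. -/
abbrev R3 := EuclideanSpace ℝ (Fin 3)

/-- Standard basis vectors of `R3`. -/
def e3 (i : Fin 3) : R3 := EuclideanSpace.single i 1

/-- `i`-th partial derivative of a complex-valued function on `R3`. -/
def pd (i : Fin 3) (f : R3 → ℂ) (x : R3) : ℂ := fderiv ℝ f x (e3 i)

/-- Gradient (as a complex 3-vector) of a complex scalar field. -/
def grad (f : R3 → ℂ) (x : R3) : Fin 3 → ℂ := fun i => pd i f x

/-- Divergence of a complex vector field. -/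
def vdiv (F : R3 → Fin 3 → ℂ) (x : R3) : ℂ := ∑ i, pd i (fun y => F y i) x

/-- Curl of a complex vector field. -/
def curl (F : R3 → Fin 3 → ℂ) (x : R3) : Fin 3 → ℂ := fun i =>
  pd (i + 1) (fun y => F y (i + 2)) x - pd (i + 2) (fun y => F y (i + 1)) x

/-- Laplacian of a complex scalar field. -/
def lap (f : R3 → ℂ) (x : R3) : ℂ := ∑ i, pd i (fun y => pd i f y) x

/-- Cross product of complex 3-vectors. -/
def crossC (a b : Fin 3 → ℂ) : Fin 3 → ℂ := fun i =>
  a (i + 1) * b (i + 2) - a (i + 2) * b (i + 1)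

/-- (Bilinear, unconjugated) dot product of complex 3-vectors. -/
def dotC (a b : Fin 3 → ℂ) : ℂ := ∑ i, a i * b i

/-- Complexification of a real vector. -/
def toC (v : R3) : Fin 3 → ℂ := fun i => (v i : ℂ)

/-- The surface measure: 2-dimensional Hausdorff measure on `R3`. -/
def surf : Measure R3 := μH[2]

/-- Scalar Sommerfeld radiation condition:
`(x/|x|)·∇φ(x) − ikφ(x) = o(1/|x|)` uniformly as `|x| → ∞`. -/
def SRC (k : ℝ) (φ : R3 → ℂ) : Prop :=
  ∀ ε > (0:ℝ), ∃ R : ℝ, ∀ x : R3, R ≤ ‖x‖ →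
    ‖dotC (toC ((‖x‖)⁻¹ • x)) (grad φ x) - Complex.I * (k:ℂ) * φ x‖ ≤ ε / ‖x‖

/-- Vector radiation condition:
`(∇×A)×(x/|x|) + (x/|x|)(∇·A) − ikA = o(1/|x|)` uniformly as `|x| → ∞`. -/
def VRC (k : ℝ) (A : R3 → Fin 3 → ℂ) : Prop :=
  ∀ ε > (0:ℝ), ∃ R : ℝ, ∀ x : R3, R ≤ ‖x‖ →
    ‖(fun i => crossC (curl A x) (toC ((‖x‖)⁻¹ • x)) i
        + toC ((‖x‖)⁻¹ • x) i * vdiv A x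
        - Complex.I * (k:ℂ) * A x i : Fin 3 → ℂ)‖ ≤ ε / ‖x‖

/-- `f = O(1/|x|)` as `|x| → ∞`. -/
def bigO1 {E : Type*} [Norm E] (f : R3 → E) : Prop :=
  ∃ C R : ℝ, ∀ x : R3, R ≤ ‖x‖ → ‖f x‖ ≤ C / ‖x‖

/-- `f = O(1/|x|²)` as `|x| → ∞`. -/
def bigO2 {E : Type*} [Norm E] (f : R3 → E) : Prop :=
  ∃ C R : ℝ, ∀ x : R3, R ≤ ‖x‖ → ‖f x‖ ≤ C / ‖x‖ ^ 2

/-- Static decay conditions for a scalar potential: `φ = O(1/|x|)`, `∇φ = O(1/|x|²)`. -/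
def SDecay (φ : R3 → ℂ) : Prop := bigO1 φ ∧ bigO2 (fun x => grad φ x)

/-- Static decay conditions for a vector potential:
`A = O(1/|x|)`, `∇×A = O(1/|x|²)`, `∇·A = O(1/|x|²)`. -/
def VDecay (A : R3 → Fin 3 → ℂ) : Prop :=
  bigO1 (fun x => A x) ∧ bigO2 (fun x => curl A x) ∧ bigO2 (fun x => vdiv A x)

/-- `D` has `C^m` boundary with outward unit normal `n`: near every boundary point the
boundary is the zero level set of a `C^m` defining function `u` with nonvanishing gradient,
negative inside `D`, and `n = ∇u/|∇u|` on the boundary. -/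
def HasLevelNormal (m : ℕ) (D : Set R3) (n : R3 → R3) : Prop :=
  ∀ x ∈ frontier D, ∃ (U : Set R3) (u : R3 → ℝ), IsOpen U ∧ x ∈ U ∧
    ContDiffOn ℝ m u U ∧ (∀ y ∈ U ∩ frontier D, gradient u y ≠ 0) ∧
    U ∩ D = {y ∈ U | u y < 0} ∧ U ∩ frontier D = {y ∈ U | u y = 0} ∧
    ∀ y ∈ U ∩ frontier D, n y = ‖gradient u y‖⁻¹ • gradient u y

/-- A bounded open scatterer `D ⊂ ℝ³` with `C²` boundary, connected exterior,
outward unit normal `n`, and boundary components `comp 0, …, comp (N-1)`. -/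
structure CDomain where
  D : Set R3
  n : R3 → R3
  openD : IsOpen D
  bddD : Bornology.IsBounded D
  extConn : IsConnected ((closure D)ᶜ)
  bdry : HasLevelNormal 2 D n
  N : ℕ
  comp : Fin N → Set R3
  compConn : ∀ j, IsConnected (comp j)
  compUnion : ⋃ j, comp j = frontier D
  compDisj : ∀ i j, i ≠ j → Disjoint (comp i) (comp j)

/-- The scalar modified Dirichlet problem with wavenumber `k ≥ 0` and data `(f, Q)`:
`Δφ + k²φ = 0` outside `cl(D)`, `φ = f + V_j` on each boundary component,
`∫_{∂D_j} ∂φ/∂n dS = Q_j`, with the Sommerfeld radiation condition for `k > 0`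
and the static decay conditions for `k = 0`. -/
def ScalarMDP (Om : CDomain) (k : ℝ) (f : R3 → ℂ) (Q : Fin Om.N → ℂ)
    (φ : R3 → ℂ) (V : Fin Om.N → ℂ) : Prop :=
  ContDiffOn ℝ 2 φ (closure Om.D)ᶜ ∧ ContDiffOn ℝ 1 φ Om.Dᶜ ∧
  (∀ x ∈ (closure Om.D)ᶜ, lap φ x + (k:ℂ)^2 * φ x = 0) ∧
  (∀ j, ∀ x ∈ Om.comp j, φ x = f x + V j) ∧
  (∀ j, ∫ x in Om.comp j, dotC (toC (Om.n x)) (grad φ x) ∂surf = Q j) ∧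
  (0 < k → SRC k φ) ∧ (k = 0 → SDecay φ)

/-- The vector modified Dirichlet problem with wavenumber `k ≥ 0` and data `(f, h, q)`:
`ΔA + k²A = 0` outside `cl(D)`, `n×A = f` on `∂D`, `∇·A = h + v_j` on each boundary
component, `∫_{∂D_j} n·A dS = q_j`, with the vector radiation condition for `k > 0`
and the static decay conditions for `k = 0`. -/
def VectorMDP (Om : CDomain) (k : ℝ) (f : R3 → Fin 3 → ℂ) (h : R3 → ℂ)
    (q : Fin Om.N → ℂ) (A : R3 → Fin 3 → ℂ) (v : Fin Om.N → ℂ) : Prop :=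
  ContDiffOn ℝ 2 A (closure Om.D)ᶜ ∧ ContDiffOn ℝ 1 A Om.Dᶜ ∧
  (∀ x ∈ (closure Om.D)ᶜ, ∀ i, lap (fun y => A y i) x + (k:ℂ)^2 * A x i = 0) ∧
  (∀ x ∈ frontier Om.D, crossC (toC (Om.n x)) (A x) = f x) ∧
  (∀ j, ∀ x ∈ Om.comp j, vdiv A x = h x + v j) ∧
  (∀ j, ∫ x in Om.comp j, dotC (toC (Om.n x)) (A x) ∂surf = q j) ∧
  (0 < k → VRC k A) ∧ (k = 0 → VDecay A)

/-- Membership in the Hölder space `C^{0,α}` on a set. -/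
def MemHolderC {E : Type*} [NormedAddCommGroup E] (r : ℝ≥0) (s : Set R3) (f : R3 → E) : Prop :=
  ∃ C : ℝ≥0, HolderOnWith C r f s

/-- The Hölder norm `‖f‖_{0,α,s} = sup_s |f| + sup_{x≠y∈s} |f x − f y|/|x−y|^α`. -/
def holderNorm {E : Type*} [NormedAddCommGroup E] (r : ℝ≥0) (s : Set R3) (f : R3 → E) : ℝ :=
  (⨆ x : s, ‖f (x : R3)‖) +
    ⨆ p : {p : R3 × R3 // p.1 ∈ s ∧ p.2 ∈ s ∧ p.1 ≠ p.2},
      ‖f (p : R3 × R3).1 - f (p : R3 × R3).2‖ / ‖(p : R3 × R3).1 - (p : R3 × R3).2‖ ^ (r : ℝ)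

/-- The Helmholtz Green's function `g_k(x) = e^{ik|x|}/(4π|x|)` (real wavenumber). -/
def gk (k : ℝ) (x : R3) : ℂ := Complex.exp (Complex.I * (k:ℂ) * (‖x‖:ℂ)) / (4 * Real.pi * ‖x‖)

/-- Single layer potential with density `σ` on the surface `S`. -/
def SL (S : Set R3) (k : ℝ) (σ : R3 → ℂ) (z : R3) : ℂ := ∫ y in S, gk k (z - y) * σ y ∂surf

/-- Componentwise single layer potential with vector density `a` on the surface `S`. -/
def SLv (S : Set R3) (k : ℝ) (a : R3 → Fin 3 → ℂ) (z : R3) : Fin 3 → ℂ :=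
  fun i => ∫ y in S, gk k (z - y) * a y i ∂surf

/-- Double layer potential: `D_k σ(z) = ∫_S (∂g_k/∂n_y)(z−y) σ(y) dS(y)`. -/
def DL (S : Set R3) (n : R3 → R3) (k : ℝ) (σ : R3 → ℂ) (z : R3) : ℂ :=
  ∫ y in S, dotC (toC (n y)) (grad (fun w => gk k (z - w)) y) * σ y ∂surf

/-- The operator `S'_k`: `S'_k σ(x) = ∫_S (∂g_k/∂n_x)(x−y) σ(y) dS(y)`. -/
def SLn (S : Set R3) (n : R3 → R3) (k : ℝ) (σ : R3 → ℂ) (x : R3) : ℂ :=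
  ∫ y in S, dotC (toC (n x)) (grad (fun w => gk k (w - y)) x) * σ y ∂surf

/-- Boundary limit from the exterior along the normal direction. -/
def extLim {E : Type*} [TopologicalSpace E] [Nonempty E] (n : R3 → R3) (x : R3)
    (F : R3 → E) : E :=
  limUnder (𝓝[>] (0:ℝ)) (fun t : ℝ => F (x + t • n x))

/-- The operator `D'_k`: normal derivative of the double layer potential at `x ∈ ∂D`,
defined as the limit of `n(x)·∇D_k[σ](x + t n(x))` as `t → 0⁺`. -/
def DLn (S : Set R3) (n : R3 → R3) (k : ℝ) (σ : R3 → ℂ) (x : R3) : ℂ :=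
  extLim n x (fun z => dotC (toC (n x)) (grad (DL S n k σ) z))

open scoped RealInnerProductSpace

/-- The stable plane-wave vector potential
`A'(x) = −u (x·E_p) √(με) e^{ik u·x}` with `k = ω√(με)`. -/
def pwA (μ ε ω : ℝ) (u Ep : R3) (x : R3) : Fin 3 → ℂ := fun i =>
  -(u i : ℂ) * ((⟪x, Ep⟫ : ℝ) : ℂ) * (Real.sqrt (μ * ε) : ℂ) *
    Complex.exp (Complex.I * ((ω * Real.sqrt (μ * ε) : ℝ) : ℂ) * ((⟪u, x⟫ : ℝ) : ℂ))

/-- The stable plane-wave scalar potential `φ'(x) = −(x·E_p) e^{ik u·x}`. -/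
def pwPhi (μ ε ω : ℝ) (u Ep : R3) (x : R3) : ℂ :=
  -((⟪x, Ep⟫ : ℝ) : ℂ) *
    Complex.exp (Complex.I * ((ω * Real.sqrt (μ * ε) : ℝ) : ℂ) * ((⟪u, x⟫ : ℝ) : ℂ))

/-!
Both potentials are multiples of one scalar field, `A' = √(με) u φ'`, and
`φ' = −(x·E_p) e^{ik u·x}` is a linear function times a plane wave, so
`∇φ' = −(E_p + ik (x·E_p) u) e^{ik u·x}`. Because `u·E_p = 0` and `|u| = 1`, the cross
terms of `Δφ'` cancel, leaving `Δφ' = −k²φ'`, and `u·∇φ' = ikφ'`, which is the Lorenz gauge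
once `k√(με) = ωμε`. The fields follow from `∇×(f w) = ∇f × w` and `u × u = 0`. Finally
`|φ'(x)| = |x·E_p|` and `|A'(x)| ≤ √(με)|x·E_p|` do not involve `ω` at all.
-/

section PartialDerivatives

variable {f g : R3 → ℂ} {x : R3}

lemma pd_const_add (a : ℂ) (i : Fin 3) : pd i (fun y => a + f y) x = pd i f x := by
  simp only [pd, fderiv_const_add]

lemma pd_const_mul (a : ℂ) (hf : DifferentiableAt ℝ f x) (i : Fin 3) :
    pd i (fun y => a * f y) x = a * pd i f x := by
  simp only [pd, fderiv_const_mul hf, smul_apply, smul_eq_mul]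

lemma pd_mul (hf : DifferentiableAt ℝ f x) (hg : DifferentiableAt ℝ g x) (i : Fin 3) :
    pd i (fun y => f y * g y) x = pd i f x * g x + f x * pd i g x := by
  simp only [pd, fderiv_fun_mul hf hg, add_apply, smul_apply, smul_eq_mul]
  ring

lemma differentiable_pd (hf : ContDiff ℝ 2 f) (i : Fin 3) : Differentiable ℝ (pd i f) :=
  ((hf.fderiv_right (m := 1) (by norm_num)).clm_apply contDiff_const).differentiable (by norm_num)

lemma lap_const_mul (a : ℂ) (hf : ContDiff ℝ 2 f) (x : R3) :
    lap (fun y => a * f y) x = a * lap f x := by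
  have hf' : Differentiable ℝ f := hf.differentiable (by norm_num)
  simp only [lap, pd_const_mul a (hf' _), pd_const_mul a (differentiable_pd hf _ _),
    Finset.mul_sum]

lemma vdiv_const_mul (w : Fin 3 → ℂ) (hf : DifferentiableAt ℝ f x) :
    vdiv (fun y i => w i * f y) x = dotC w (grad f x) := by
  simp only [vdiv, dotC, grad, pd_const_mul _ hf]

lemma curl_const_mul (w : Fin 3 → ℂ) (hf : DifferentiableAt ℝ f x) :
    curl (fun y i => w i * f y) x = crossC (grad f x) w := by
  ext i
  simp only [curl, crossC, grad, pd_const_mul _ hf]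
  ring

end PartialDerivatives

lemma pd_ofReal_inner (v : R3) (i : Fin 3) (x : R3) :
    pd i (fun y => ((⟪y, v⟫ : ℝ) : ℂ)) x = v i := by
  have h : (fun y => ((⟪y, v⟫ : ℝ) : ℂ)) = ofRealCLM.comp (innerSL ℝ v) := by
    ext y; simp [real_inner_comm]
  simp [pd, h, e3, EuclideanSpace.inner_single_right]

lemma contDiff_ofReal_comp {n : WithTop ℕ∞} {h : R3 → ℝ} (hh : ContDiff ℝ n h) :
    ContDiff ℝ n (fun y => (h y : ℂ)) :=
  ofRealCLM.contDiff.comp hh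

def planeWave (k : ℝ) (u x : R3) : ℂ := Complex.exp (I * k * ((⟪u, x⟫ : ℝ) : ℂ))

lemma contDiff_planeWave (k : ℝ) (u : R3) {n : WithTop ℕ∞} : ContDiff ℝ n (planeWave k u) :=
  (contDiff_const.mul (contDiff_ofReal_comp (contDiff_const.inner ℝ contDiff_id))).cexp

lemma pd_planeWave (k : ℝ) (u : R3) (i : Fin 3) (x : R3) :
    pd i (planeWave k u) x = I * k * u i * planeWave k u x := by
  have h : HasFDerivAt (planeWave k u) _ x :=
    ((ofRealCLM.comp (innerSL ℝ u)).hasFDerivAt.const_mul (I * k)).cexp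
  rw [pd, h.fderiv]
  simp only [ContinuousLinearMap.comp_apply, coe_innerSL_apply, ofRealCLM_apply, e3, smul_apply,
    EuclideanSpace.inner_single_right, Real.ringHom_apply, one_mul, smul_eq_mul, planeWave]
  ring

lemma pd_affine_mul_planeWave (a b : ℂ) (k : ℝ) (u v : R3) (i : Fin 3) (x : R3) :
    pd i (fun y => (a + b * ((⟪y, v⟫ : ℝ) : ℂ)) * planeWave k u y) x
      = (b * v i + I * k * u i * (a + b * ((⟪x, v⟫ : ℝ) : ℂ))) * planeWave k u x := by
  have hinner : ContDiff ℝ 1 (fun y => ((⟪y, v⟫ : ℝ) : ℂ)) :=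
    contDiff_ofReal_comp (contDiff_id.inner ℝ contDiff_const)
  have haffine : ContDiff ℝ 1 (fun y => a + b * ((⟪y, v⟫ : ℝ) : ℂ)) :=
    contDiff_const.add (contDiff_const.mul hinner)
  rw [pd_mul (haffine.differentiable one_ne_zero x)
      ((contDiff_planeWave k u (n := 1)).differentiable one_ne_zero x),
    pd_const_add, pd_const_mul _ (hinner.differentiable one_ne_zero x), pd_ofReal_inner,
    pd_planeWave]
  ring

lemma ofReal_inner_eq (u v : R3) :
    ((⟪u, v⟫ : ℝ) : ℂ) = u 0 * v 0 + u 1 * v 1 + u 2 * v 2 := by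
  simp only [PiLp.inner_apply, RCLike.inner_apply, conj_trivial, Fin.sum_univ_three]
  push_cast
  ring

section Potentials

variable {μ ε ω : ℝ} {u Ep : R3}

lemma pwA_eq_mul_pwPhi :
    pwA μ ε ω u Ep = fun y i => ((√(μ * ε) : ℂ) * u i) * pwPhi μ ε ω u Ep y := by
  funext y i
  simp only [pwA, pwPhi]
  ring

lemma pwPhi_apply (x : R3) :
    pwPhi μ ε ω u Ep x = -((⟪x, Ep⟫ : ℝ) : ℂ) * planeWave (ω * √(μ * ε)) u x :=
  rfl

lemma contDiff_pwPhi {n : WithTop ℕ∞} : ContDiff ℝ n (pwPhi μ ε ω u Ep) :=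
  (contDiff_ofReal_comp (contDiff_id.inner ℝ contDiff_const)).neg.mul (contDiff_planeWave _ u)

lemma pd_pwPhi (i : Fin 3) (x : R3) :
    pd i (pwPhi μ ε ω u Ep) x
      = (-(Ep i : ℂ) + -(I * (ω * √(μ * ε) : ℝ) * u i) * ((⟪x, Ep⟫ : ℝ) : ℂ))
          * planeWave (ω * √(μ * ε)) u x := by
  have h : pwPhi μ ε ω u Ep
      = fun y => (0 + -1 * ((⟪y, Ep⟫ : ℝ) : ℂ)) * planeWave (ω * √(μ * ε)) u y := by
    funext y; simp only [pwPhi, planeWave]; ring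
  rw [h, pd_affine_mul_planeWave]
  ring

lemma lap_pwPhi (x : R3) :
    lap (pwPhi μ ε ω u Ep) x
      = -(2 * I * (ω * √(μ * ε) : ℝ) * ⟪u, Ep⟫) * planeWave (ω * √(μ * ε)) u x
        - ((ω * √(μ * ε) : ℝ) : ℂ) ^ 2 * ⟪u, u⟫ * pwPhi μ ε ω u Ep x := by
  simp only [lap, pd_pwPhi, pd_affine_mul_planeWave, Fin.sum_univ_three]
  rw [ofReal_inner_eq u Ep, ofReal_inner_eq u u]
  simp only [pwPhi_apply]
  linear_combination (-planeWave (ω * √(μ * ε)) u x *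
    ((ω * √(μ * ε) : ℝ) : ℂ) ^ 2 * ((⟪x, Ep⟫ : ℝ) : ℂ) * (u 0 * u 0 + u 1 * u 1 + u 2 * u 2)) * I_sq

lemma lap_pwPhi_add_sq_mul (hu : ‖u‖ = 1) (huEp : ⟪u, Ep⟫ = (0:ℝ)) (x : R3) :
    lap (pwPhi μ ε ω u Ep) x + ((ω * √(μ * ε) : ℝ) : ℂ) ^ 2 * pwPhi μ ε ω u Ep x = 0 := by
  rw [lap_pwPhi, huEp, real_inner_self_eq_norm_sq, hu]
  push_cast
  ring

lemma lap_pwA_add_sq_mul (hu : ‖u‖ = 1) (huEp : ⟪u, Ep⟫ = (0:ℝ)) (x : R3) (i : Fin 3) :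
    lap (fun y => pwA μ ε ω u Ep y i) x + ((ω * √(μ * ε) : ℝ) : ℂ) ^ 2 * pwA μ ε ω u Ep x i
      = 0 := by
  simp only [pwA_eq_mul_pwPhi]
  rw [lap_const_mul _ contDiff_pwPhi, mul_left_comm, ← mul_add, lap_pwPhi_add_sq_mul hu huEp,
    mul_zero]

lemma vdiv_pwA (hμε : 0 ≤ μ * ε) (hu : ‖u‖ = 1) (huEp : ⟪u, Ep⟫ = (0:ℝ)) (x : R3) :
    vdiv (pwA μ ε ω u Ep) x = I * ω * μ * ε * pwPhi μ ε ω u Ep x := by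
  have horth := ofReal_inner_eq u Ep
  have hunit := ofReal_inner_eq u u
  rw [huEp] at horth
  rw [real_inner_self_eq_norm_sq, hu] at hunit
  have hsq : (√(μ * ε) : ℂ) ^ 2 = μ * ε := by exact_mod_cast Real.sq_sqrt hμε
  rw [pwA_eq_mul_pwPhi, vdiv_const_mul (fun i => (√(μ * ε) : ℂ) * u i)
    (contDiff_pwPhi.differentiable one_ne_zero x)]
  simp only [dotC, grad, pd_pwPhi, Fin.sum_univ_three, pwPhi_apply]
  push_cast at horth hunit ⊢
  linear_combination ((√(μ * ε) : ℂ) * planeWave (ω * √(μ * ε)) u x) * horth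
    + (I * ω * (√(μ * ε) : ℂ) ^ 2 * ((⟪x, Ep⟫ : ℝ) : ℂ) * planeWave (ω * √(μ * ε)) u x) * hunit
    + (-(I * ω * ((⟪x, Ep⟫ : ℝ) : ℂ) * planeWave (ω * √(μ * ε)) u x)) * hsq

lemma I_mul_pwA_sub_grad_pwPhi (x : R3) (i : Fin 3) :
    I * ω * pwA μ ε ω u Ep x i - grad (pwPhi μ ε ω u Ep) x i
      = Ep i * planeWave (ω * √(μ * ε)) u x := by
  simp only [grad, pd_pwPhi, pwA, planeWave]
  push_cast
  ring

lemma curl_pwA (x : R3) :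
    curl (pwA μ ε ω u Ep) x
      = fun i => (√(μ * ε) : ℂ) * crossC (toC u) (toC Ep) i * planeWave (ω * √(μ * ε)) u x := by
  rw [pwA_eq_mul_pwPhi, curl_const_mul (fun i => (√(μ * ε) : ℂ) * u i)
    (contDiff_pwPhi.differentiable one_ne_zero x)]
  funext i
  simp only [crossC, grad, pd_pwPhi, toC]
  ring

lemma one_div_mul_curl_pwA (hμ : 0 < μ) (x : R3) (i : Fin 3) :
    (1 / (μ : ℂ)) * curl (pwA μ ε ω u Ep) x i
      = (√(ε / μ) : ℂ) * crossC (toC u) (toC Ep) i * planeWave (ω * √(μ * ε)) u x := by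
  have hsqrt : √(ε / μ) = √(μ * ε) / μ := by
    rw [show ε / μ = μ * ε / (μ * μ) by field_simp, Real.sqrt_div' _ (mul_self_nonneg μ),
      Real.sqrt_mul_self hμ.le]
  rw [curl_pwA, hsqrt]
  push_cast
  ring

lemma norm_planeWave (k : ℝ) (u x : R3) : ‖planeWave k u x‖ = 1 := by
  rw [planeWave, norm_exp]
  simp

lemma norm_pwPhi (x : R3) : ‖pwPhi μ ε ω u Ep x‖ = |⟪x, Ep⟫| := by
  rw [pwPhi_apply, norm_mul, norm_planeWave, mul_one, norm_neg, norm_real, Real.norm_eq_abs]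

lemma norm_pwA_le (x : R3) : ‖pwA μ ε ω u Ep x‖ ≤ √(μ * ε) * ‖u‖ * |⟪x, Ep⟫| := by
  refine (pi_norm_le_iff_of_nonneg (by positivity)).mpr fun i => ?_
  rw [pwA_eq_mul_pwPhi, norm_mul, norm_mul, norm_pwPhi, norm_real, norm_real,
    Real.norm_of_nonneg (Real.sqrt_nonneg _)]
  gcongr
  exact PiLp.norm_apply_le u i

variable (μ ε u Ep) in
lemma exists_bound_pwA_pwPhi_of_isBounded {S : Set R3} (hS : Bornology.IsBounded S) :
    ∃ C : ℝ, ∀ ω' : ℝ, ∀ x ∈ S, ‖pwA μ ε ω' u Ep x‖ ≤ C ∧ ‖pwPhi μ ε ω' u Ep x‖ ≤ C := by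
  obtain ⟨R, hR⟩ := isBounded_iff_forall_norm_le.mp hS
  refine ⟨max (√(μ * ε) * ‖u‖) 1 * (R * ‖Ep‖), fun ω' x hx => ?_⟩
  have hP : |⟪x, Ep⟫| ≤ R * ‖Ep‖ :=
    (abs_real_inner_le_norm x Ep).trans (by gcongr; exact hR x hx)
  have hP₀ : 0 ≤ R * ‖Ep‖ := (abs_nonneg _).trans hP
  constructor
  · calc ‖pwA μ ε ω' u Ep x‖ ≤ √(μ * ε) * ‖u‖ * |⟪x, Ep⟫| := norm_pwA_le x
      _ ≤ max (√(μ * ε) * ‖u‖) 1 * (R * ‖Ep‖) := by gcongr; exact le_max_left _ _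
  · calc ‖pwPhi μ ε ω' u Ep x‖ = 1 * |⟪x, Ep⟫| := by rw [norm_pwPhi, one_mul]
      _ ≤ max (√(μ * ε) * ‖u‖) 1 * (R * ‖Ep‖) := by gcongr; exact le_max_right _ _

end Potentials

theorem plane_wave_stable_lorenz_potentials_general (ω μ ε : ℝ) (hμ : 0 < μ)
    (hε : 0 < ε) (k : ℝ) (hk : k = ω * Real.sqrt (μ * ε))
    (u Ep : R3) (hu : ‖u‖ = 1) (huEp : ⟪u, Ep⟫ = (0:ℝ)) :
    (∀ x : R3, ∀ i, lap (fun y => pwA μ ε ω u Ep y i) x + (k:ℂ)^2 * pwA μ ε ω u Ep x i = 0) ∧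
    (∀ x : R3, lap (pwPhi μ ε ω u Ep) x + (k:ℂ)^2 * pwPhi μ ε ω u Ep x = 0) ∧
    (∀ x : R3, vdiv (pwA μ ε ω u Ep) x = Complex.I * (ω:ℂ) * (μ:ℂ) * (ε:ℂ) * pwPhi μ ε ω u Ep x) ∧
    (∀ x : R3, ∀ i,
      Complex.I * (ω:ℂ) * pwA μ ε ω u Ep x i - grad (pwPhi μ ε ω u Ep) x i
        = (Ep i : ℂ) * Complex.exp (Complex.I * (k:ℂ) * ((⟪u, x⟫ : ℝ) : ℂ))) ∧
    (∀ x : R3, ∀ i,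
      (1 / (μ:ℂ)) * curl (pwA μ ε ω u Ep) x i
        = (Real.sqrt (ε / μ) : ℂ) * crossC (toC u) (toC Ep) i *
            Complex.exp (Complex.I * (k:ℂ) * ((⟪u, x⟫ : ℝ) : ℂ))) ∧
    (∀ S : Set R3, Bornology.IsBounded S → ∃ C : ℝ,
      ∀ ω' : ℝ, 0 ≤ ω' → ω' ≤ ω → ∀ x ∈ S,
        ‖pwA μ ε ω' u Ep x‖ ≤ C ∧ ‖pwPhi μ ε ω' u Ep x‖ ≤ C) := by
  subst hk
  refine ⟨lap_pwA_add_sq_mul hu huEp, lap_pwPhi_add_sq_mul hu huEp,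
    vdiv_pwA (by positivity) hu huEp, I_mul_pwA_sub_grad_pwPhi, one_div_mul_curl_pwA hμ,
    fun S hS => ?_⟩
  obtain ⟨C, hC⟩ := exists_bound_pwA_pwPhi_of_isBounded μ ε u Ep hS
  exact ⟨C, fun ω' _ _ => hC ω'⟩

/-- Stable Lorenz-gauge potentials for an incoming plane wave:
the potentials `A', φ'` above satisfy the Helmholtz equations and the Lorenz gauge,
represent the plane wave `E = E_p e^{iku·x}`, `H = √(ε/μ)(u×E_p)e^{iku·x}`, and are
bounded on every bounded set uniformly as `ω → 0`. -/
theorem plane_wave_stable_lorenz_potentials (ω μ ε : ℝ) (hω : 0 < ω) (hμ : 0 < μ)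
    (hε : 0 < ε) (k : ℝ) (hk : k = ω * Real.sqrt (μ * ε))
    (u Ep : R3) (hu : ‖u‖ = 1) (huEp : ⟪u, Ep⟫ = (0:ℝ)) :
    (∀ x : R3, ∀ i, lap (fun y => pwA μ ε ω u Ep y i) x + (k:ℂ)^2 * pwA μ ε ω u Ep x i = 0) ∧
    (∀ x : R3, lap (pwPhi μ ε ω u Ep) x + (k:ℂ)^2 * pwPhi μ ε ω u Ep x = 0) ∧
    (∀ x : R3, vdiv (pwA μ ε ω u Ep) x = Complex.I * (ω:ℂ) * (μ:ℂ) * (ε:ℂ) * pwPhi μ ε ω u Ep x) ∧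
    (∀ x : R3, ∀ i,
      Complex.I * (ω:ℂ) * pwA μ ε ω u Ep x i - grad (pwPhi μ ε ω u Ep) x i
        = (Ep i : ℂ) * Complex.exp (Complex.I * (k:ℂ) * ((⟪u, x⟫ : ℝ) : ℂ))) ∧
    (∀ x : R3, ∀ i,
      (1 / (μ:ℂ)) * curl (pwA μ ε ω u Ep) x i
        = (Real.sqrt (ε / μ) : ℂ) * crossC (toC u) (toC Ep) i *
            Complex.exp (Complex.I * (k:ℂ) * ((⟪u, x⟫ : ℝ) : ℂ))) ∧
    (∀ S : Set R3, Bornology.IsBounded S → ∃ C : ℝ,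
      ∀ ω' : ℝ, 0 ≤ ω' → ω' ≤ ω → ∀ x ∈ S,
        ‖pwA μ ε ω' u Ep x‖ ≤ C ∧ ‖pwPhi μ ε ω' u Ep x‖ ≤ C) :=
  plane_wave_stable_lorenz_potentials_general ω μ ε hμ hε k hk u Ep hu huEp
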